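/- arXiv:2112.07073 — 2 statements merged into one kernel-verified Lean document; each statement's English description precedes it below -/
import Mathlib

section
/- Let λ ∈ [0, π/2) and let h be analytic on the open unit disk 𝔻 with h(0) = 1 and h(z) ≠ 0 for all z ∈ 𝔻. Suppose that for every z ∈ 𝔻 and every real number A with |A| ≥ sec λ · √(1 + 2 cos λ) − tan λ one has e^{−iλ} h(z) + z h′(z)/h(z) ≠ iA. Then Re(e^{−iλ} h(z)) > 0 for all z ∈ 𝔻. -/
/-!
Put `p = e^{-iλ} h`, so `Re p(0) = cos λ > 0`. If `Re p` is not positive on `𝔻`, let `z₀` be a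
zero of `Re p` of least modulus, `p(z₀) = iρ`. The Cayley transform `(c - p)/(c̄ + p)`, `c = p(0)`,
maps `|z| ≤ |z₀|` into the closed unit disc, vanishes at `0` and has modulus `1` at `z₀`, so
Jack's lemma gives `z₀ p'(z₀) = -k |c - iρ|² / (2 cos λ)` with `k ≥ 1`. Then
`e^{-iλ} h + z h'/h = p + z p'/p` equals `iA` at `z₀`, where
`A = ρ + k (1 + 2ρ sin λ + ρ²)/(2ρ cos λ)`, and by AM–GM `|A| ≥ sec λ · √(1 + 2 cos λ) - tan λ`, contradicting the hypothesis.
-/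

open Complex ComplexConjugate Metric Set Filter Topology

theorem IsLocalMaxOn.hasDerivAt_nonpos {φ : ℝ → ℝ} {φ' a : ℝ}
    (h : IsLocalMaxOn φ (Ici a) a) (hφ : HasDerivAt φ φ' a) : φ' ≤ 0 := by
  have hone : (1 : ℝ) ∈ posTangentConeAt (Ici a) a :=
    mem_posTangentConeAt_of_segment_subset
      ((segment_subset_Icc (by simp)).trans Icc_subset_Ici_self)
  simpa using h.hasFDerivWithinAt_nonpos hφ.hasFDerivAt.hasFDerivWithinAt hone

theorem hasDerivAt_norm_sq_comp_exp_ofReal_mul {f : ℂ → ℂ} {f' : ℂ} (hf : HasDerivAt f f' 1)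
    (v : ℂ) :
    HasDerivAt (fun t : ℝ => ‖f (exp (t * v))‖ ^ 2) (2 * (conj (f 1) * f' * v).re) 0 := by
  have hexp : HasDerivAt (fun w : ℂ => exp (w * v)) v ((0 : ℝ) : ℂ) := by
    simpa using (hasDerivAt_mul_const (x := ((0 : ℝ) : ℂ)) v).cexp
  have hf' : HasDerivAt f f' (exp (((0 : ℝ) : ℂ) * v)) := by simpa using hf
  refine (hf'.comp (h := fun w : ℂ => exp (w * v)) _ hexp).comp_ofReal.norm_sq.congr_deriv ?_
  simp [Complex.inner]
  ring

theorem jack_lemma_one {f : ℂ → ℂ} (hd : DifferentiableOn ℂ f (ball 0 1))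
    (hd₁ : DifferentiableAt ℂ f 1) (h₀ : f 0 = 0)
    (hmaps : MapsTo f (closedBall 0 1) (closedBall 0 1)) (h₁ : ‖f 1‖ = 1) :
    ∃ k : ℝ, 1 ≤ k ∧ deriv f 1 = k * f 1 := by
  have hschwarz : ∀ ζ, ‖ζ‖ ≤ 1 → ‖f ζ‖ ≤ ‖ζ‖ := by
    intro ζ hζ
    rcases hζ.lt_or_eq with hlt | heq
    · exact Complex.norm_le_norm_of_mapsTo_ball hd
        (hmaps.mono_left ball_subset_closedBall) h₀ hlt
    · simpa [heq] using hmaps (mem_closedBall_zero_iff.mpr hζ)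
  set K := conj (f 1) * deriv f 1
  -- `‖f ζ‖² - ‖ζ‖²` is `≤ 0` on the closed disc and vanishes at `1`; differentiating along the
  -- curves `t ↦ exp (t v)`, `Re v ≤ 0`, which enter the disc, gives `Re ((K - 1) v) ≤ 0`.
  have hdir : ∀ v : ℂ, v.re ≤ 0 → ((K - 1) * v).re ≤ 0 := by
    intro v hv
    have hφ := (hasDerivAt_norm_sq_comp_exp_ofReal_mul hd₁.hasDerivAt v).sub
      (hasDerivAt_norm_sq_comp_exp_ofReal_mul (hasDerivAt_id (1 : ℂ)) v)
    have hmax : IsLocalMaxOn (fun t : ℝ => ‖f (exp (t * v))‖ ^ 2 - ‖id (exp (t * v))‖ ^ 2)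
        (Ici 0) 0 := by
      refine eventually_of_mem self_mem_nhdsWithin fun t (ht : 0 ≤ t) => ?_
      have hnorm : ‖exp (t * v)‖ ≤ 1 := by
        rw [Complex.norm_exp]; simpa using mul_nonpos_of_nonneg_of_nonpos ht hv
      have hle := hschwarz _ hnorm
      simp [h₁]
      gcongr
    have hφ' := hmax.hasDerivAt_nonpos hφ
    simp only [id, map_one, one_mul] at hφ'
    rw [sub_mul, one_mul, sub_re]
    linarith
  have hre : 1 ≤ K.re := by simpa using hdir (-1) (by simp)
  have him : K.im = 0 := by
    have hI := hdir I (by simp)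
    have hnegI := hdir (-I) (by simp)
    simp only [mul_neg, neg_re, mul_I_re, sub_im, one_im] at hI hnegI
    linarith
  refine ⟨K.re, hre, ?_⟩
  have hK : (K.re : ℂ) = K := Complex.ext (by simp) (by simp [him])
  have hunit : f 1 * conj (f 1) = 1 := by
    rw [mul_conj, normSq_eq_norm_sq, h₁]; simp
  rw [hK]
  linear_combination (-deriv f 1) * hunit

theorem jack_lemma {ω : ℂ → ℂ} {z₀ : ℂ} (hd : DifferentiableOn ℂ ω (ball 0 ‖z₀‖))
    (hd₀ : DifferentiableAt ℂ ω z₀) (h₀ : ω 0 = 0)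
    (hmaps : MapsTo ω (closedBall 0 ‖z₀‖) (closedBall 0 1)) (hz₀ : ‖ω z₀‖ = 1) :
    ∃ k : ℝ, 1 ≤ k ∧ z₀ * deriv ω z₀ = k * ω z₀ := by
  have hz₀ne : z₀ ≠ 0 := by rintro rfl; simp [h₀] at hz₀
  have hscale : ∀ ζ : ℂ, ‖z₀ * ζ‖ = ‖z₀‖ * ‖ζ‖ := fun ζ => norm_mul _ _
  have hderiv : HasDerivAt (fun ζ => ω (z₀ * ζ)) (z₀ * deriv ω z₀) 1 := by
    have := hd₀.hasDerivAt.comp_of_eq (1 : ℂ) ((hasDerivAt_id (1 : ℂ)).const_mul z₀) (by simp)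
    simpa [Function.comp_def, mul_comm] using this
  obtain ⟨k, hk, hk'⟩ := jack_lemma_one (f := fun ζ => ω (z₀ * ζ))
    (fun ζ hζ => (hd.comp ((differentiable_id.const_mul z₀).differentiableOn)
      (fun ζ hζ => by simpa [hscale, norm_pos_iff.mpr hz₀ne] using hζ)) ζ hζ)
    hderiv.differentiableAt (by simpa using h₀)
    (fun ζ hζ => hmaps (by simpa [hscale, norm_pos_iff.mpr hz₀ne] using hζ)) (by simpa using hz₀)
  exact ⟨k, hk, by simpa [hderiv.deriv] using hk'⟩

theorem exists_closest_zero_of_continuousOn_ball {E : Type*} [NormedAddCommGroup E]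
    [NormedSpace ℝ E] [ProperSpace E] {u : E → ℝ} {R : ℝ} {w : E}
    (hu : ContinuousOn u (ball 0 R)) (h₀ : 0 < u 0) (hw : w ∈ ball 0 R) (hw' : u w ≤ 0) :
    ∃ z₀ ∈ ball (0 : E) R, u z₀ = 0 ∧ ∀ z ∈ closedBall (0 : E) ‖z₀‖, 0 ≤ u z := by
  have hsub : closedBall (0 : E) ‖w‖ ⊆ ball 0 R := closedBall_subset_ball (mem_ball_zero_iff.1 hw)
  set T := closedBall (0 : E) ‖w‖ ∩ {z | u z ≤ 0}
  have hT : IsCompact T := (isCompact_closedBall 0 ‖w‖).of_isClosed_subset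
    ((hu.mono hsub).preimage_isClosed_of_isClosed isClosed_closedBall isClosed_Iic)
    inter_subset_left
  obtain ⟨z₀, ⟨hz₀w, hz₀u⟩, hmin⟩ :=
    hT.exists_isMinOn ⟨w, by simp, hw'⟩ continuous_norm.continuousOn
  have hz₀R : closedBall (0 : E) ‖z₀‖ ⊆ ball 0 R :=
    (closedBall_subset_closedBall (mem_closedBall_zero_iff.1 hz₀w)).trans hsub
  have hz₀ne : ‖z₀‖ ≠ 0 := by
    rw [norm_ne_zero_iff]; rintro rfl; exact hz₀u.not_gt h₀
  have hpos : ball (0 : E) ‖z₀‖ ⊆ {z | 0 ≤ u z} := fun z hz =>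
    show 0 ≤ u z from le_of_not_gt fun hneg => by
      have hzT : z ∈ T := ⟨closedBall_subset_closedBall (mem_closedBall_zero_iff.1 hz₀w)
        (ball_subset_closedBall hz), hneg.le⟩
      exact (mem_ball_zero_iff.1 hz).not_ge (hmin hzT)
  have hnonneg : closedBall (0 : E) ‖z₀‖ ⊆ {z | 0 ≤ u z} := by
    rw [← closure_ball 0 hz₀ne]
    refine (closure_minimal (subset_inter ball_subset_closedBall hpos)
      ((hu.mono hz₀R).preimage_isClosed_of_isClosed isClosed_closedBall isClosed_Ici)).trans
      inter_subset_right
  exact ⟨z₀, hz₀R (by simp), le_antisymm hz₀u (hnonneg (by simp)), fun z hz => hnonneg hz⟩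

noncomputable def cayley (a w : ℂ) : ℂ := (a - w) / (conj a + w)

section Cayley

variable {a w : ℂ}

theorem normSq_conj_add_sub_normSq_sub (a w : ℂ) :
    normSq (conj a + w) - normSq (a - w) = 4 * a.re * w.re := by
  simp only [normSq_apply, add_re, add_im, sub_re, sub_im, conj_re, conj_im]
  ring

theorem conj_add_ne_zero (ha : 0 < a.re) (hw : 0 ≤ w.re) : conj a + w ≠ 0 := by
  intro h
  have := congrArg re h
  simp only [add_re, conj_re, zero_re] at this
  linarith

theorem norm_cayley_le_one (ha : 0 < a.re) (hw : 0 ≤ w.re) : ‖cayley a w‖ ≤ 1 := by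
  rw [cayley, norm_div, div_le_one (norm_pos_iff.2 (conj_add_ne_zero ha hw)),
    ← sq_le_sq₀ (norm_nonneg _) (norm_nonneg _), ← normSq_eq_norm_sq, ← normSq_eq_norm_sq]
  nlinarith [normSq_conj_add_sub_normSq_sub a w]

theorem conj_sub_of_re_eq_zero (hw : w.re = 0) : conj (a - w) = conj a + w := by
  apply Complex.ext <;> simp [hw]

theorem norm_cayley_of_re_eq_zero (ha : a.re ≠ 0) (hw : w.re = 0) : ‖cayley a w‖ = 1 := by
  have hne : a - w ≠ 0 := sub_ne_zero.2 (by rintro rfl; exact ha hw)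
  rw [cayley, norm_div, ← conj_sub_of_re_eq_zero hw, Complex.norm_conj,
    div_self (norm_ne_zero_iff.2 hne)]

theorem hasDerivAt_cayley (hw : conj a + w ≠ 0) :
    HasDerivAt (cayley a) (-(2 * a.re) / (conj a + w) ^ 2) w := by
  have := ((hasDerivAt_id w).const_sub a).div ((hasDerivAt_id w).const_add (conj a)) hw
  refine this.congr_deriv ?_
  rw [show 2 * (a.re : ℂ) = a + conj a by rw [add_conj]; push_cast; ring]
  simp only [id]
  ring

end Cayley

theorem exists_mul_deriv_eq_of_re_eq_zero {p : ℂ → ℂ} {z₀ : ℂ}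
    (hd : ∀ z ∈ closedBall (0 : ℂ) ‖z₀‖, DifferentiableAt ℂ p z)
    (hre : ∀ z ∈ closedBall (0 : ℂ) ‖z₀‖, 0 ≤ (p z).re) (h₀ : 0 < (p 0).re)
    (hz₀ : (p z₀).re = 0) :
    ∃ k : ℝ, 1 ≤ k ∧ z₀ * deriv p z₀ = -(k * normSq (p 0 - p z₀) / (2 * (p 0).re)) := by
  set a := p 0
  have hω : ∀ z ∈ closedBall (0 : ℂ) ‖z₀‖, HasDerivAt (fun z => cayley a (p z))
      (-(2 * a.re) / (conj a + p z) ^ 2 * deriv p z) z := fun z hz =>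
    (hasDerivAt_cayley (conj_add_ne_zero h₀ (hre z hz))).comp z (hd z hz).hasDerivAt
  have hz₀mem : z₀ ∈ closedBall (0 : ℂ) ‖z₀‖ := by simp
  obtain ⟨k, hk, hjack⟩ := jack_lemma
    (fun z hz => (hω z (ball_subset_closedBall hz)).differentiableAt.differentiableWithinAt)
    (hω z₀ hz₀mem).differentiableAt (show cayley a a = 0 by simp [cayley])
    (fun z hz => mem_closedBall_zero_iff.2 (norm_cayley_le_one h₀ (hre z hz)))
    (norm_cayley_of_re_eq_zero h₀.ne' hz₀)
  refine ⟨k, hk, ?_⟩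
  rw [(hω z₀ hz₀mem).deriv, cayley] at hjack
  have hN : (normSq (a - p z₀) : ℂ) = (a - p z₀) * (conj a + p z₀) := by
    rw [← conj_sub_of_re_eq_zero hz₀, mul_conj]
  have hden := conj_add_ne_zero h₀ (hre z₀ hz₀mem)
  have hre₀ : (a.re : ℂ) ≠ 0 := ofReal_ne_zero.2 h₀.ne'
  rw [hN]
  field_simp at hjack ⊢
  linear_combination -hjack

theorem inv_mul_sqrt_sub_div_le_abs {c s k ρ : ℝ} (hc : 0 < c) (hs : 0 ≤ s) (hs₁ : s ≤ 1)
    (hk : 1 ≤ k) (hρ : ρ ≠ 0) :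
    c⁻¹ * √(1 + 2 * c) - s / c ≤ |ρ + k * (1 + 2 * ρ * s + ρ ^ 2) / (2 * c) / ρ| := by
  set t := √(1 + 2 * c)
  have ht : t ^ 2 = 1 + 2 * c := Real.sq_sqrt (by linarith)
  have hN : 0 ≤ 1 + 2 * ρ * s + ρ ^ 2 := by nlinarith [sq_nonneg (ρ + s)]
  have hkN := le_mul_of_one_le_left hN hk
  -- AM–GM, in the form `(ρ t ± 1)² ≥ 0` with `t² = 1 + 2c`.
  rcases hρ.lt_or_gt with hneg | hpos
  · refine le_trans ?_ (neg_le_abs _)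
    rw [← sub_nonneg, show -(ρ + k * (1 + 2 * ρ * s + ρ ^ 2) / (2 * c) / ρ) - (c⁻¹ * t - s / c)
      = (2 * c * ρ ^ 2 + k * (1 + 2 * ρ * s + ρ ^ 2) + 2 * ρ * t - 2 * ρ * s) / (2 * c * -ρ) by
        field_simp; ring]
    apply div_nonneg
    · nlinarith [sq_nonneg (ρ * t + 1)]
    · nlinarith
  · refine le_trans ?_ (le_abs_self _)
    rw [← sub_nonneg, show ρ + k * (1 + 2 * ρ * s + ρ ^ 2) / (2 * c) / ρ - (c⁻¹ * t - s / c)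
      = (2 * c * ρ ^ 2 + k * (1 + 2 * ρ * s + ρ ^ 2) - 2 * ρ * t + 2 * ρ * s) / (2 * c * ρ) by
        field_simp; ring]
    apply div_nonneg
    · nlinarith [sq_nonneg (ρ * t - 1), mul_nonneg hpos.le hs]
    · nlinarith

theorem exp_neg_ofReal_mul_I_re (x : ℝ) : (exp (-(x : ℂ) * I)).re = Real.cos x := by
  simpa using exp_ofReal_mul_I_re (-x)

theorem exp_neg_ofReal_mul_I_im (x : ℝ) : (exp (-(x : ℂ) * I)).im = -Real.sin x := by
  simpa using exp_ofReal_mul_I_im (-x)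

theorem normSq_exp_neg_ofReal_mul_I_sub (x ρ : ℝ) :
    normSq (exp (-(x : ℂ) * I) - ρ * I) = 1 + 2 * ρ * Real.sin x + ρ ^ 2 := by
  rw [normSq_apply]
  simp only [sub_re, sub_im, exp_neg_ofReal_mul_I_re, exp_neg_ofReal_mul_I_im, mul_I_re, mul_I_im,
    ofReal_re, ofReal_im]
  linear_combination Real.sin_sq_add_cos_sq x

theorem mul_add_mul_deriv_div_eq {c u u' z : ℂ} {ρ σ : ℝ} (hu : u ≠ 0) (hρ : ρ ≠ 0)
    (hcu : c * u = ρ * I) (hσ : z * (c * u') = -σ) :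
    c * u + z * u' / u = (ρ + σ / ρ : ℝ) * I := by
  have hρ' : (ρ : ℂ) ≠ 0 := ofReal_ne_zero.2 hρ
  have hcu₀ : c * u ≠ 0 := by rw [hcu]; exact mul_ne_zero hρ' I_ne_zero
  refine mul_right_cancel₀ hcu₀ ?_
  calc (c * u + z * u' / u) * (c * u) = c * u * (c * u) + z * (c * u') := by field_simp
    _ = (ρ + σ / ρ : ℝ) * I * (c * u) := by
      rw [hσ, hcu]
      push_cast
      field_simp
      linear_combination -(σ : ℂ) * I_sq

theorem stmt_3 (lam : ℝ) (hlam : lam ∈ Set.Ico (0 : ℝ) (Real.pi / 2))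
    (h : ℂ → ℂ) (hanal : DifferentiableOn ℂ h (ball (0 : ℂ) 1))
    (h0 : h 0 = 1) (hne : ∀ z ∈ ball (0 : ℂ) 1, h z ≠ 0)
    (hslit : ∀ z ∈ ball (0 : ℂ) 1, ∀ A : ℝ,
      (Real.cos lam)⁻¹ * Real.sqrt (1 + 2 * Real.cos lam) - Real.tan lam ≤ |A| →
      Complex.exp (-(lam : ℂ) * I) * h z + z * deriv h z / h z ≠ A * I) :
    ∀ z ∈ ball (0 : ℂ) 1, 0 < (Complex.exp (-(lam : ℂ) * I) * h z).re := by
  obtain ⟨hlam₀, hlam₁⟩ := hlam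
  have hcos : 0 < Real.cos lam := Real.cos_pos_of_mem_Ioo ⟨by linarith [Real.pi_pos], hlam₁⟩
  have hsin : 0 ≤ Real.sin lam :=
    Real.sin_nonneg_of_nonneg_of_le_pi hlam₀ (by linarith [Real.pi_pos])
  set c := exp (-(lam : ℂ) * I)
  set p : ℂ → ℂ := fun z => c * h z
  have hp₀ : p 0 = c := by simp [p, h0]
  have hc : 0 < c.re := by rwa [exp_neg_ofReal_mul_I_re]
  have hpd : ∀ z ∈ ball (0 : ℂ) 1, HasDerivAt p (c * deriv h z) z := fun z hz =>
    ((hanal z hz).differentiableAt (isOpen_ball.mem_nhds hz)).hasDerivAt.const_mul c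
  by_contra! ⟨w, hw, hw'⟩
  obtain ⟨z₀, hz₀, hre₀, hnonneg⟩ := exists_closest_zero_of_continuousOn_ball
    (u := fun z => (p z).re) (continuous_re.comp_continuousOn
      fun z hz => (hpd z hz).continuousAt.continuousWithinAt) (by rwa [hp₀]) hw hw'
  have hsub : closedBall (0 : ℂ) ‖z₀‖ ⊆ ball 0 1 := closedBall_subset_ball (mem_ball_zero_iff.1 hz₀)
  obtain ⟨k, hk, hderiv⟩ := exists_mul_deriv_eq_of_re_eq_zero
    (fun z hz => (hpd z (hsub hz)).differentiableAt) hnonneg (by rwa [hp₀]) hre₀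
  set ρ := (p z₀).im
  have hpz₀ : c * h z₀ = ρ * I := Complex.ext (by simpa [p] using hre₀) (by simp [ρ, p])
  have hρ : ρ ≠ 0 := fun hρ =>
    mul_ne_zero (exp_ne_zero _) (hne z₀ hz₀) (by rw [hpz₀, hρ, ofReal_zero, zero_mul])
  rw [(hpd z₀ hz₀).deriv, hp₀, show p z₀ = ρ * I from hpz₀, normSq_exp_neg_ofReal_mul_I_sub,
    exp_neg_ofReal_mul_I_re] at hderiv
  refine hslit z₀ hz₀ _ ?_
    (mul_add_mul_deriv_div_eq (hne z₀ hz₀) hρ hpz₀ (by exact_mod_cast hderiv))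
  rw [Real.tan_eq_sin_div_cos]
  exact inv_mul_sqrt_sub_div_le_abs hcos hsin (Real.sin_le_one lam) hk hρ
end

section
/- Let 0 < α ≤ 1. Let f be analytic on the open unit disk 𝔻 with f(0) = 0 and f′(0) = 1, suppose Re(f(z)/z) > 0 for all z ∈ 𝔻 \ {0} (with f(z)/z → 1 as z → 0), and suppose |f′(z)·(z/f(z))^{α+1} − 1| < 1 for all z ∈ 𝔻 \ {0}, where the power is the principal branch. Set R_α = ( −(3 + 2α) + √(17 + 12α + 4α²) ) / 4. Then for every z with |z| < R_α, f′(z) ≠ 0 and Re(1 + z f″(z)/f′(z)) > 0; that is, f is convex in |z| < R_α. -/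
/-!
Write `f z = z * p z`, where `p = dslope f 0` has positive real part, and `f' = w * p ^ (α + 1)`,
where `w = f' * (z / f) ^ (α + 1)` satisfies `w 0 = 1` and `‖w - 1‖ < 1`. Then
`1 + z f''/f' = 1 + z w'/w + (α + 1) z p'/p`. On `‖z‖ = r` the Schwarz–Pick lemma (and, for `w`,
Schwarz's lemma `‖w z - 1‖ ≤ r`) gives `‖z w'/w‖ ≤ r / (1 - r)` and `‖z p'/p‖ ≤ 2 r / (1 - r²)`,
so the real part is at least `(1 - (3 + 2α) r - 2 r²) / (1 - r²)`, which is positive exactly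
when `r < R_α`.
-/

open Complex Metric Set ComplexConjugate

noncomputable def diskMobius (a z : ℂ) : ℂ := (z + a) / (1 + conj a * z)

lemma normSq_one_add_conj_mul_sub_normSq_add (a z : ℂ) :
    normSq (1 + conj a * z) - normSq (z + a) = (1 - normSq a) * (1 - normSq z) := by
  simp only [normSq_apply, add_re, add_im, mul_re, mul_im, conj_re, conj_im, one_re, one_im]
  ring

lemma one_add_conj_mul_ne_zero {a z : ℂ} (ha : ‖a‖ < 1) (hz : ‖z‖ < 1) :
    1 + conj a * z ≠ 0 := by
  intro h
  have : ‖conj a * z‖ = 1 := by rw [eq_neg_of_add_eq_zero_right h, norm_neg, norm_one]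
  rw [norm_mul, norm_conj] at this
  nlinarith [norm_nonneg a, norm_nonneg z]

lemma mapsTo_diskMobius {a : ℂ} (ha : ‖a‖ < 1) :
    MapsTo (diskMobius a) (ball 0 1) (ball 0 1) := by
  intro z hz
  rw [mem_ball_zero_iff] at hz ⊢
  have hden := one_add_conj_mul_ne_zero ha hz
  have key := normSq_one_add_conj_mul_sub_normSq_add a z
  simp only [← Complex.sq_norm] at key
  rw [diskMobius, norm_div, div_lt_one (norm_pos_iff.2 hden)]
  have : 0 < (1 - ‖a‖ ^ 2) * (1 - ‖z‖ ^ 2) := by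
    apply mul_pos <;> nlinarith [norm_nonneg a, norm_nonneg z]
  nlinarith [norm_nonneg (z + a), norm_nonneg (1 + conj a * z)]

lemma hasDerivAt_diskMobius (a : ℂ) {z : ℂ} (h : 1 + conj a * z ≠ 0) :
    HasDerivAt (diskMobius a) (((1 - ‖a‖ ^ 2 : ℝ) : ℂ) / (1 + conj a * z) ^ 2) z := by
  push_cast
  rw [← conj_mul']
  have := ((hasDerivAt_id' z).add_const a).div
    (((hasDerivAt_id' z).const_mul (conj a)).const_add 1) h
  exact this.congr_deriv (by ring)

lemma differentiableOn_diskMobius {a : ℂ} (ha : ‖a‖ < 1) :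
    DifferentiableOn ℂ (diskMobius a) (ball 0 1) := fun _ hz =>
  (hasDerivAt_diskMobius a (one_add_conj_mul_ne_zero ha (mem_ball_zero_iff.1 hz)))
    |>.differentiableAt.differentiableWithinAt

lemma norm_deriv_mul_one_sub_sq_le_of_mapsTo_ball {g : ℂ → ℂ}
    (hd : DifferentiableOn ℂ g (ball 0 1)) (hm : MapsTo g (ball 0 1) (ball 0 1)) {a : ℂ}
    (ha : a ∈ ball 0 1) : ‖deriv g a‖ * (1 - ‖a‖ ^ 2) ≤ 1 - ‖g a‖ ^ 2 := by
  set b := g a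
  have ha1 : ‖a‖ < 1 := mem_ball_zero_iff.1 ha
  have hb1 : ‖-b‖ < 1 := by rw [norm_neg, ← mem_ball_zero_iff]; exact hm ha
  -- Schwarz's lemma at `0` for `F`, whose derivative there is `g' a (1 - ‖a‖²) / (1 - ‖b‖²)`
  set F := diskMobius (-b) ∘ g ∘ diskMobius a
  have hF : DifferentiableOn ℂ F (ball 0 1) :=
    (differentiableOn_diskMobius hb1).comp (hd.comp (differentiableOn_diskMobius ha1)
      (mapsTo_diskMobius ha1)) (hm.comp (mapsTo_diskMobius ha1))
  have hF0 : F 0 = 0 := by simp [F, diskMobius, b]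
  have hFm : MapsTo F (ball 0 1) (closedBall (F 0) 1) := by
    rw [hF0]
    exact ((mapsTo_diskMobius hb1).comp (hm.comp (mapsTo_diskMobius ha1))).mono_right
      ball_subset_closedBall
  have hSchwarz := Complex.norm_deriv_le_one_of_mapsTo_ball hF hFm one_pos
  have hga : HasDerivAt g (deriv g a) a :=
    (hd.differentiableAt (isOpen_ball.mem_nhds ha)).hasDerivAt
  have hb0 : 1 + conj (-b) * b ≠ 0 := one_add_conj_mul_ne_zero hb1 (by simpa using hb1)
  have hFd := (hasDerivAt_diskMobius (-b) hb0).comp_of_eq 0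
    (hga.comp_of_eq 0 (hasDerivAt_diskMobius a (z := 0) (by simp)) (by simp [diskMobius]))
    (by simp [diskMobius, b])
  rw [hFd.deriv] at hSchwarz
  have hb2 : 0 < 1 - ‖b‖ ^ 2 := by nlinarith [norm_nonneg b, norm_neg b]
  have hbb : 1 + conj (-b) * b = ((1 - ‖b‖ ^ 2 : ℝ) : ℂ) := by
    rw [map_neg, neg_mul, conj_mul']; push_cast; ring
  rw [hbb] at hSchwarz
  have ha2 : 0 < 1 - ‖a‖ ^ 2 := by nlinarith [norm_nonneg a]
  simp only [norm_neg, mul_zero, add_zero, one_pow, div_one, norm_mul, norm_div, norm_pow,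
    Complex.norm_of_nonneg hb2.le, Complex.norm_of_nonneg ha2.le] at hSchwarz
  rwa [sq (1 - ‖b‖ ^ 2), div_mul_cancel_left₀ hb2.ne', inv_mul_le_iff₀ hb2, mul_one]
    at hSchwarz

lemma one_sub_sq_norm_sub_one_div_add_one {u : ℂ} (hu : u + 1 ≠ 0) :
    1 - ‖(u - 1) / (u + 1)‖ ^ 2 = 4 * u.re / ‖u + 1‖ ^ 2 := by
  have hu' : ‖u + 1‖ ^ 2 ≠ 0 := by positivity
  rw [norm_div, div_pow, eq_div_iff hu', sub_mul, div_mul_cancel₀ _ hu']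
  simp only [Complex.sq_norm, normSq_apply, add_re, add_im, sub_re, sub_im, one_re, one_im]
  ring

lemma add_one_ne_zero_of_re_pos {u : ℂ} (hu : 0 < u.re) : u + 1 ≠ 0 := by
  intro h
  have := congrArg re h
  simp only [add_re, one_re, zero_re] at this
  linarith

lemma norm_sub_one_div_add_one_lt_one {u : ℂ} (hu : 0 < u.re) : ‖(u - 1) / (u + 1)‖ < 1 := by
  have hu1 := add_one_ne_zero_of_re_pos hu
  have h := one_sub_sq_norm_sub_one_div_add_one hu1
  have : 0 < 4 * u.re / ‖u + 1‖ ^ 2 := div_pos (by linarith) (by positivity)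
  nlinarith [norm_nonneg ((u - 1) / (u + 1))]

lemma norm_logDeriv_mul_one_sub_sq_le_of_re_pos {p : ℂ → ℂ}
    (hp : DifferentiableOn ℂ p (ball 0 1)) (hre : ∀ z ∈ ball 0 1, 0 < (p z).re) {z : ℂ}
    (hz : z ∈ ball 0 1) : ‖logDeriv p z‖ * (1 - ‖z‖ ^ 2) ≤ 2 := by
  set q : ℂ → ℂ := fun x => (p x - 1) / (p x + 1)
  have hne : ∀ x ∈ ball (0 : ℂ) 1, p x + 1 ≠ 0 :=
    fun x hx => add_one_ne_zero_of_re_pos (hre x hx)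
  have hq : DifferentiableOn ℂ q (ball 0 1) := fun x hx =>
    ((hp x hx).sub_const 1).div ((hp x hx).add_const 1) (hne x hx)
  have hqm : MapsTo q (ball 0 1) (ball 0 1) := fun x hx =>
    mem_ball_zero_iff.2 (norm_sub_one_div_add_one_lt_one (hre x hx))
  have hpd : HasDerivAt p (deriv p z) z :=
    (hp.differentiableAt (isOpen_ball.mem_nhds hz)).hasDerivAt
  have hqd : HasDerivAt q (2 * deriv p z / (p z + 1) ^ 2) z :=
    ((hpd.sub_const 1).div (hpd.add_const 1) (hne z hz)).congr_deriv (by ring)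
  have hSP := norm_deriv_mul_one_sub_sq_le_of_mapsTo_ball hq hqm hz
  rw [hqd.deriv, one_sub_sq_norm_sub_one_div_add_one (hne z hz)] at hSP
  have hpz : 0 < ‖p z‖ := norm_pos_iff.2 fun h => by simpa [h] using hre z hz
  have h1 : 0 < ‖p z + 1‖ ^ 2 := by have := norm_pos_iff.2 (hne z hz); positivity
  simp only [norm_div, norm_mul, norm_pow, Complex.norm_ofNat] at hSP
  rw [logDeriv_apply, norm_div, div_mul_eq_mul_div, div_le_iff₀ hpz]
  rw [div_mul_eq_mul_div, div_le_div_iff_of_pos_right h1] at hSP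
  linarith [Complex.re_le_norm (p z)]

lemma norm_logDeriv_mul_one_sub_sq_le_of_norm_sub_one_lt_one {w : ℂ → ℂ}
    (hw : DifferentiableOn ℂ w (ball 0 1)) (hw1 : ∀ z ∈ ball 0 1, ‖w z - 1‖ < 1)
    (hw0 : w 0 = 1) {z : ℂ} (hz : z ∈ ball 0 1) :
    ‖logDeriv w z‖ * (1 - ‖z‖ ^ 2) ≤ 1 + ‖z‖ := by
  have hd : DifferentiableOn ℂ (fun x => w x - 1) (ball 0 1) := hw.sub_const 1
  have hm : MapsTo (fun x => w x - 1) (ball 0 1) (ball 0 1) := fun x hx =>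
    mem_ball_zero_iff.2 (hw1 x hx)
  have hSchwarz : ‖w z - 1‖ ≤ ‖z‖ := Complex.norm_le_norm_of_mapsTo_ball hd
    (hm.mono_right ball_subset_closedBall) (by simp [hw0]) (mem_ball_zero_iff.1 hz)
  have hSP := norm_deriv_mul_one_sub_sq_le_of_mapsTo_ball hd hm hz
  rw [deriv_sub_const] at hSP
  have hlb : 1 - ‖w z - 1‖ ≤ ‖w z‖ := by
    linarith [norm_sub_rev (w z) 1, norm_sub_norm_le (1 : ℂ) (w z), norm_one (α := ℂ)]
  have ht := hw1 z hz
  rw [logDeriv_apply, norm_div, div_mul_eq_mul_div, div_le_iff₀ (by linarith)]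
  nlinarith [norm_nonneg (w z - 1)]

lemma logDeriv_fun_cpow_const {f : ℂ → ℂ} {x : ℂ} (c : ℂ) (hf : DifferentiableAt ℂ f x)
    (hx : f x ∈ slitPlane) : logDeriv (fun z => f z ^ c) x = c * logDeriv f x := by
  have h0 := slitPlane_ne_zero hx
  have hc : f x ^ c ≠ 0 := cpow_ne_zero_iff.2 (.inl h0)
  rw [logDeriv_apply, (hf.hasDerivAt.cpow_const hx).deriv, logDeriv_apply,
    cpow_sub _ _ h0, cpow_one]
  field_simp

lemma logDeriv_eq_logDeriv_div_cpow_add {g p : ℂ → ℂ} {x : ℂ} (c : ℂ)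
    (hg : DifferentiableAt ℂ g x) (hgx : g x ≠ 0) (hp : DifferentiableAt ℂ p x)
    (hpx : p x ∈ slitPlane) :
    logDeriv g x = logDeriv (fun z => g z / p z ^ c) x + c * logDeriv p x := by
  rw [logDeriv_div (g := fun z => p z ^ c) x hgx
    (cpow_ne_zero_iff.2 (.inl (slitPlane_ne_zero hpx))) hg (hp.cpow_const hpx),
    logDeriv_fun_cpow_const c hp hpx]
  ring

lemma dslope_zero_eq_div {f : ℂ → ℂ} (hf0 : f 0 = 0) {z : ℂ} (hz : z ≠ 0) :
    dslope f 0 z = f z / z := by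
  rw [dslope_of_ne _ hz, slope_def_field, hf0, sub_zero, sub_zero]

lemma re_dslope_zero_pos {f : ℂ → ℂ} {s : Set ℂ} (hf0 : f 0 = 0) (hf'0 : 0 < (deriv f 0).re)
    (hP : ∀ z ∈ s, z ≠ 0 → 0 < (f z / z).re) {z : ℂ} (hz : z ∈ s) :
    0 < (dslope f 0 z).re := by
  rcases eq_or_ne z 0 with rfl | hz0
  · rwa [dslope_same]
  · rw [dslope_zero_eq_div hf0 hz0]
    exact hP z hz hz0

lemma div_cpow_eq_inv_dslope_zero_cpow {f : ℂ → ℂ} (hf0 : f 0 = 0) {z : ℂ} (hz : z ≠ 0)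
    (hp : dslope f 0 z ∈ slitPlane) (c : ℂ) : (z / f z) ^ c = (dslope f 0 z ^ c)⁻¹ := by
  rw [← inv_cpow _ _ (slitPlane_arg_ne_pi hp), dslope_zero_eq_div hf0 hz, inv_div]

lemma norm_deriv_div_dslope_zero_cpow_sub_one_lt_one {f : ℂ → ℂ} {s : Set ℂ} {c : ℂ}
    (hf0 : f 0 = 0) (hf'0 : deriv f 0 = 1) (hslit : ∀ z ∈ s, dslope f 0 z ∈ slitPlane)
    (hU : ∀ z ∈ s, z ≠ 0 → ‖deriv f z * (z / f z) ^ c - 1‖ < 1) {z : ℂ}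
    (hz : z ∈ s) : ‖deriv f z / dslope f 0 z ^ c - 1‖ < 1 := by
  rcases eq_or_ne z 0 with rfl | hz0
  · simp [dslope_same, hf'0]
  · simpa only [div_cpow_eq_inv_dslope_zero_cpow hf0 hz0 (hslit z hz), ← div_eq_mul_inv]
      using hU z hz hz0

lemma one_sub_mul_sub_two_mul_sq_pos {b r : ℝ} (hr0 : 0 ≤ r)
    (hr : r < (-b + √(b ^ 2 + 8)) / 4) : 0 < 1 - b * r - 2 * r ^ 2 := by
  have hs : √(b ^ 2 + 8) ^ 2 = b ^ 2 + 8 := Real.sq_sqrt (by positivity)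
  have hbs : |b| < √(b ^ 2 + 8) := (Real.lt_sqrt (abs_nonneg b)).2 (by rw [sq_abs]; linarith)
  -- `1 - b r - 2 r²` factors as `2 (r₊ - r) (r - r₋)` with `r₋ < 0 ≤ r < r₊`
  nlinarith [mul_pos (sub_pos.2 hr) (show 0 < r + (b + √(b ^ 2 + 8)) / 4 by
    linarith [neg_abs_le b])]

lemma re_one_add_mul_add_pos {z A B : ℂ} {c : ℝ} (hc : 0 ≤ c)
    (hA : ‖A‖ * (1 - ‖z‖ ^ 2) ≤ 1 + ‖z‖) (hB : ‖B‖ * (1 - ‖z‖ ^ 2) ≤ 2)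
    (hpos : 0 < 1 - (2 * c + 1) * ‖z‖ - 2 * ‖z‖ ^ 2) : 0 < (1 + z * (A + c * B)).re := by
  have hr := norm_nonneg z
  have h1 : 0 < 1 - ‖z‖ ^ 2 := by nlinarith
  have hre : -(‖z‖ * (‖A‖ + c * ‖B‖)) ≤ (z * (A + c * B)).re := by
    have : ‖z * (A + c * B)‖ ≤ ‖z‖ * (‖A‖ + c * ‖B‖) := by
      rw [norm_mul]
      gcongr
      refine (norm_add_le _ _).trans_eq ?_
      rw [norm_mul, norm_real, Real.norm_of_nonneg hc]
    linarith [neg_abs_le (z * (A + c * B)).re, abs_re_le_norm (z * (A + c * B))]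
  rw [add_re, one_re]
  nlinarith [mul_le_mul_of_nonneg_left hA hr, mul_le_mul_of_nonneg_left hB (mul_nonneg hr hc)]

theorem stmt_17 (α : ℝ) (hα : α ∈ Set.Ioc (0 : ℝ) 1)
    (f : ℂ → ℂ) (hanal : DifferentiableOn ℂ f (ball (0 : ℂ) 1))
    (hf0 : f 0 = 0) (hf'0 : deriv f 0 = 1)
    (hP : ∀ z ∈ ball (0 : ℂ) 1, z ≠ 0 → 0 < (f z / z).re)
    (hU : ∀ z ∈ ball (0 : ℂ) 1, z ≠ 0 →
      ‖deriv f z * (z / f z) ^ ((α : ℂ) + 1) - 1‖ < 1)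
    (R : ℝ)
    (hR : R = (-(3 + 2 * α) + Real.sqrt (17 + 12 * α + 4 * α ^ 2)) / 4) :
    ∀ z : ℂ, ‖z‖ < R →
      deriv f z ≠ 0 ∧ 0 < (1 + z * deriv (deriv f) z / deriv f z).re := by
  set p := dslope f 0
  have hp : DifferentiableOn ℂ p (ball 0 1) :=
    (differentiableOn_dslope (ball_mem_nhds 0 one_pos)).2 hanal
  have hp_re : ∀ z ∈ ball (0 : ℂ) 1, 0 < (p z).re :=
    fun z hz => re_dslope_zero_pos hf0 (by simp [hf'0]) hP hz
  have hslit : ∀ z ∈ ball (0 : ℂ) 1, p z ∈ slitPlane := fun z hz => .inl (hp_re z hz)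
  set w := fun z => deriv f z / p z ^ ((α : ℂ) + 1)
  have hw : DifferentiableOn ℂ w (ball 0 1) := (hanal.deriv isOpen_ball).div
    (hp.cpow_const hslit) fun z hz => cpow_ne_zero_iff.2 (.inl (slitPlane_ne_zero (hslit z hz)))
  have hw1 : ∀ z ∈ ball (0 : ℂ) 1, ‖w z - 1‖ < 1 :=
    fun z => norm_deriv_div_dslope_zero_cpow_sub_one_lt_one hf0 hf'0 hslit hU
  intro z hz
  have hpos : 0 < 1 - (2 * (α + 1) + 1) * ‖z‖ - 2 * ‖z‖ ^ 2 :=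
    one_sub_mul_sub_two_mul_sq_pos (norm_nonneg z) (by rw [hR] at hz; convert hz using 4 <;> ring)
  have hz1 : z ∈ ball (0 : ℂ) 1 := mem_ball_zero_iff.2 (by nlinarith [norm_nonneg z, hα.1])
  have hf'z : deriv f z ≠ 0 := fun h => by simpa [w, h] using hw1 z hz1
  refine ⟨hf'z, ?_⟩
  rw [mul_div_assoc, ← logDeriv_apply, logDeriv_eq_logDeriv_div_cpow_add ((α : ℂ) + 1)
    ((hanal.deriv isOpen_ball).differentiableAt (isOpen_ball.mem_nhds hz1)) hf'z
    (hp.differentiableAt (isOpen_ball.mem_nhds hz1)) (hslit z hz1)]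
  have hw0 : w 0 = 1 := by simp [w, p, dslope_same, hf'0]
  have := re_one_add_mul_add_pos (by linarith [hα.1])
    (norm_logDeriv_mul_one_sub_sq_le_of_norm_sub_one_lt_one hw hw1 hw0 hz1)
    (norm_logDeriv_mul_one_sub_sq_le_of_re_pos hp hp_re hz1) hpos
  push_cast at this
  exact this
end
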